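/- Let d ≥ 2 be an integer, S ≥ 4, let b = min(⌊S⌋, d − 1), and let μ(u) = 1/(1 + e^{−u}) be the sigmoid function. Then there exist θ⋆ ∈ ℝ^d with ‖θ⋆‖ ≤ S, an integer n with n ≥ ((d−1)/(4b))·exp(b/4300), vectors a₁, …, a_n ∈ ℝ^d with ‖a_t‖ ≤ 1 for all t, and parameters θ₁, …, θ_n ∈ ℝ^d with ‖θ_t‖ ≤ S for all t, such that, defining for each t the function φ̄_t(a) = η(a)·log(η(a)/f_t(a)) + (1 − η(a))·log((1 − η(a))/(1 − f_t(a))) with η(a) = μ(⟨a, θ⋆⟩) and f_t(a) = μ(⟨a, θ_t⟩), the following hold for every t ≤ n: ∑_{i=1}^{t−1} φ̄_t(a_i) ≤ 1/8 and φ̄_t(a_t) ≥ 1/8. -/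

import Mathlib

/-!
The excess loss at `a` is `klSigmoid ⟪a, θ⋆⟫ ⟪a, θ⟫`, the KL divergence between the Bernoulli
laws with logits `⟪a, θ⋆⟫` and `⟪a, θ⟫`. It vanishes when the logits agree, it is at least `1/8`
for the logit pairs `(0, 4)` and `(x, 2)` with `x ≤ -4`, and it is at most `e^x Δ + e^y` when
`x - y ≤ Δ`.

For `b ≤ 8600` an orthonormal basis `e_t` with `θ⋆ = 0` and `θ_t = 4 e_t` is already long enough.
For larger `b`, take a bias direction and `⌊(d-1)/b⌋` orthogonal blocks of `b` directions, and a
binary code of length `b` with about `e^{b/4300}/2` words at pairwise distance `> b/1000`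
(Gilbert–Varshamov). Each pair (block, word) gives an action: the bias direction plus the
normalised sign pattern of the word in the block. The true parameter only sees the bias, so that
`⟪a, θ⋆⟫ = -β` for every action (`β = S/2 - 2`), and `θ_t` adds the sign pattern of `a_t`, scaled
so that `⟪a_t, θ_t⟫ = 2`. Actions of other blocks do not see this addition, and actions with
another word of the same block have `⟪a_i, θ_t⟫ ≤ 2 - b/1000`; so all earlier excess losses are
exponentially small, and fewer than `e^{b/4300}` of them are nonzero.
-/

open RealInnerProductSpace

/-- Expected excess log-loss of the logistic model with parameter `θ` against the true
parameter `θ⋆` at action `a`: `KL(Bernoulli(η(a)) ‖ Bernoulli(f(a)))` where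
`η(a) = μ(⟨a, θ⋆⟩)` and `f(a) = μ(⟨a, θ⟩)`. -/
noncomputable def logisticExcess {d : ℕ} (μ : ℝ → ℝ)
    (θstar θ a : EuclideanSpace ℝ (Fin d)) : ℝ :=
  μ ⟪a, θstar⟫ * Real.log (μ ⟪a, θstar⟫ / μ ⟪a, θ⟫) +
    (1 - μ ⟪a, θstar⟫) * Real.log ((1 - μ ⟪a, θstar⟫) / (1 - μ ⟪a, θ⟫))

open Real Finset

namespace Real

lemma sigmoid_le_exp (x : ℝ) : sigmoid x ≤ exp x := by
  rw [sigmoid_def, inv_le_comm₀ (by positivity) (exp_pos x), ← exp_neg]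
  linarith [exp_pos (-x)]

lemma inv_one_sub_sigmoid (y : ℝ) : (1 - sigmoid y)⁻¹ = 1 + exp y := by
  rw [← sigmoid_neg, sigmoid_def, inv_inv, neg_neg]

lemma log_sigmoid_div_sigmoid_le {x y Δ : ℝ} (h : x - y ≤ Δ) (hΔ : 0 ≤ Δ) :
    log (sigmoid x / sigmoid y) ≤ Δ := by
  rw [log_le_iff_le_exp (div_pos (sigmoid_pos x) (sigmoid_pos y)),
    div_le_iff₀ (sigmoid_pos y), sigmoid_def, sigmoid_def, ← div_eq_mul_inv,
    le_div_iff₀ (by positivity), inv_mul_le_iff₀ (by positivity)]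
  have h1 : 1 ≤ exp Δ := one_le_exp hΔ
  have h2 : exp (-y) ≤ exp Δ * exp (-x) := by rw [← exp_add]; exact exp_le_exp.2 (by linarith)
  linarith

end Real

noncomputable def klSigmoid (x y : ℝ) : ℝ :=
  sigmoid x * log (sigmoid x / sigmoid y) +
    (1 - sigmoid x) * log ((1 - sigmoid x) / (1 - sigmoid y))

lemma klSigmoid_self (x : ℝ) : klSigmoid x x = 0 := by
  simp [klSigmoid, (sigmoid_pos x).ne', (sub_pos.2 (sigmoid_lt_one x)).ne']

lemma klSigmoid_le {x y Δ : ℝ} (h : x - y ≤ Δ) (hΔ : 0 ≤ Δ) :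
    klSigmoid x y ≤ exp x * Δ + exp y := by
  have hσx := sigmoid_pos x
  have hσx1 := sigmoid_lt_one x
  have first : sigmoid x * log (sigmoid x / sigmoid y) ≤ exp x * Δ :=
    calc sigmoid x * log (sigmoid x / sigmoid y) ≤ sigmoid x * Δ :=
          mul_le_mul_of_nonneg_left (log_sigmoid_div_sigmoid_le h hΔ) hσx.le
      _ ≤ exp x * Δ := mul_le_mul_of_nonneg_right (sigmoid_le_exp x) hΔ
  have second : (1 - sigmoid x) * log ((1 - sigmoid x) / (1 - sigmoid y)) ≤ exp y := by
    have hlog : log ((1 - sigmoid x) / (1 - sigmoid y)) ≤ log (1 + exp y) := by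
      rw [div_eq_mul_inv, inv_one_sub_sigmoid]
      exact log_le_log (by have := exp_pos y; nlinarith) (by nlinarith [exp_pos y])
    have hlog0 : 0 ≤ log (1 + exp y) := log_nonneg (by linarith [exp_pos y])
    calc (1 - sigmoid x) * log ((1 - sigmoid x) / (1 - sigmoid y))
        ≤ (1 - sigmoid x) * log (1 + exp y) := mul_le_mul_of_nonneg_left hlog (by linarith)
      _ ≤ log (1 + exp y) := mul_le_of_le_one_left hlog0 (by linarith)
      _ ≤ exp y := by linarith [log_le_sub_one_of_pos (by positivity : 0 < 1 + exp y)]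
  unfold klSigmoid
  linarith

lemma klSigmoid_ge (x y : ℝ) :
    (1 - sigmoid x) * log ((1 - sigmoid x) * (1 + exp y)) - 1 ≤ klSigmoid x y := by
  have hσx := sigmoid_pos x
  have hσy := sigmoid_pos y
  have first : sigmoid x - sigmoid y ≤ sigmoid x * log (sigmoid x / sigmoid y) := by
    have := one_sub_inv_le_log_of_pos (div_pos hσx hσy)
    rw [inv_div] at this
    calc sigmoid x - sigmoid y = sigmoid x * (1 - sigmoid y / sigmoid x) := by field_simp
      _ ≤ _ := mul_le_mul_of_nonneg_left this hσx.le
  rw [klSigmoid, div_eq_mul_inv (1 - sigmoid x), inv_one_sub_sigmoid]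
  linarith [sigmoid_lt_one y, sigmoid_lt_one x]

lemma one_eighth_le_klSigmoid_zero_four : 1 / 8 ≤ klSigmoid 0 4 := by
  refine le_trans ?_ (klSigmoid_ge 0 4)
  rw [sigmoid_zero]
  have hlog : 3 ≤ log ((1 - 2⁻¹) * (1 + exp 4)) := by
    calc (3 : ℝ) ≤ 4 - log 2 := by linarith [log_le_sub_one_of_pos (by norm_num : (0:ℝ) < 2)]
      _ = log (exp 4 / 2) := by rw [log_div (exp_pos 4).ne' two_ne_zero, log_exp]
      _ ≤ _ := log_le_log (by positivity) (by linarith [exp_pos 4])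
  linarith

lemma one_eighth_le_klSigmoid_two {x : ℝ} (hx : x ≤ -4) : 1 / 8 ≤ klSigmoid x 2 := by
  refine le_trans ?_ (klSigmoid_ge x 2)
  have hp : 3 / 4 ≤ 1 - sigmoid x := by
    have h1 : exp x ≤ exp (-4) := exp_le_exp.2 hx
    have h2 : exp (-4) ≤ 1 / 4 := by
      rw [exp_neg, inv_le_comm₀ (exp_pos 4) (by norm_num)]
      linarith [add_one_le_exp (4 : ℝ)]
    linarith [sigmoid_le_exp x]
  have hlog : 5 / 3 ≤ log ((1 - sigmoid x) * (1 + exp 2)) := by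
    calc (5 / 3 : ℝ) ≤ log (3 / 4) + 2 := by
          linarith [one_sub_inv_le_log_of_pos (by norm_num : (0:ℝ) < 3 / 4)]
      _ = log (3 / 4 * exp 2) := by rw [log_mul (by norm_num) (exp_pos 2).ne', log_exp]
      _ ≤ _ := log_le_log (by positivity)
          (mul_le_mul hp (by linarith) (exp_pos 2).le (by linarith))
  nlinarith

variable {E : Type*} [NormedAddCommGroup E] [InnerProductSpace ℝ E]

def IsLogisticEluderSeq (S : ℝ) {n : ℕ} (θstar : E) (a θ : Fin n → E) : Prop :=
  ‖θstar‖ ≤ S ∧ (∀ t, ‖a t‖ ≤ 1) ∧ (∀ t, ‖θ t‖ ≤ S) ∧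
    ∀ t, (∑ i ∈ univ.filter (fun i => i < t), klSigmoid ⟪a i, θstar⟫ ⟪a i, θ t⟫) ≤ 1 / 8 ∧
      1 / 8 ≤ klSigmoid ⟪a t, θstar⟫ ⟪a t, θ t⟫

variable (E) in
def HasLogisticEluderSeq (S L : ℝ) : Prop :=
  ∃ n : ℕ, L ≤ n ∧ ∃ (θstar : E) (a θ : Fin n → E), IsLogisticEluderSeq S θstar a θ

lemma isLogisticEluderSeq_orthonormal {n : ℕ} {v : Fin n → E} (hv : Orthonormal ℝ v) {S : ℝ}
    (hS : 4 ≤ S) : IsLogisticEluderSeq S 0 v fun t => (4 : ℝ) • v t := by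
  have hinner (i t : Fin n) : ⟪v i, (4 : ℝ) • v t⟫ = if i = t then 4 else 0 := by
    rw [real_inner_smul_right, orthonormal_iff_ite.1 hv]
    split_ifs <;> norm_num
  refine ⟨by simp; linarith, fun t => (hv.1 t).le, fun t => ?_, fun t => ⟨?_, ?_⟩⟩
  · rw [norm_smul, hv.1 t]
    norm_num
    linarith
  · rw [sum_eq_zero fun i hi => by
      rw [inner_zero_right, hinner, if_neg (mem_filter.1 hi).2.ne, klSigmoid_self]]
    norm_num
  · rw [inner_zero_right, hinner, if_pos rfl]
    exact one_eighth_le_klSigmoid_zero_four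


lemma card_hammingDist_lt_le {b : ℕ} (x : Fin b → Bool) (r : ℕ) :
    #{y | hammingDist x y < r} ≤ ∑ j ∈ range r, b.choose j := by
  classical
  let diff : (Fin b → Bool) → Finset (Fin b) := fun y => {p | x p ≠ y p}
  have hdiff : Set.InjOn diff {y | hammingDist x y < r} := by
    intro y _ z _ h
    funext p
    have := congrArg (p ∈ ·) h
    simp only [diff, mem_filter, mem_univ, true_and, eq_iff_iff] at this
    cases hx : x p <;> cases hy : y p <;> cases hz : z p <;> simp_all
  calc #{y | hammingDist x y < r}
      ≤ #((range r).biUnion fun j => powersetCard j (univ : Finset (Fin b))) := by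
        refine card_le_card_of_injOn diff (fun y hy => ?_) (by simpa using hdiff)
        simp only [coe_filter, mem_univ, true_and, Set.mem_ofPred_eq] at hy
        simp only [coe_biUnion, coe_range, Set.mem_Iio, Set.mem_iUnion, mem_coe,
          mem_powersetCard, subset_univ, true_and]
        exact ⟨_, hy, rfl⟩
    _ ≤ ∑ j ∈ range r, #(powersetCard j (univ : Finset (Fin b))) := card_biUnion_le
    _ = ∑ j ∈ range r, b.choose j := by simp

lemma exists_finset_card_eq_pairwise_le_hammingDist {b r N : ℕ} (hr : 0 < r)
    (hN : N * ∑ j ∈ range r, b.choose j ≤ 2 ^ b) :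
    ∃ C : Finset (Fin b → Bool), #C = N ∧
      (C : Set (Fin b → Bool)).Pairwise fun x y => r ≤ hammingDist x y := by
  induction N with
  | zero => exact ⟨∅, by simp⟩
  | succ N ih =>
    obtain ⟨C, hCcard, hC⟩ := ih (le_trans (Nat.mul_le_mul_right _ N.le_succ) hN)
    have hV : 0 < ∑ j ∈ range r, b.choose j :=
      sum_pos' (fun _ _ => Nat.zero_le _) ⟨0, mem_range.2 hr, by simp⟩
    have hcover : #(C.biUnion fun x => {y | hammingDist x y < r}) < 2 ^ b :=
      calc #(C.biUnion fun x => {y | hammingDist x y < r})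
          ≤ ∑ x ∈ C, #{y | hammingDist x y < r} := card_biUnion_le
        _ ≤ N * ∑ j ∈ range r, b.choose j := by
          rw [← hCcard, ← smul_eq_mul, ← sum_const]
          exact sum_le_sum fun x _ => card_hammingDist_lt_le x r
        _ < 2 ^ b := by rw [Nat.succ_mul] at hN; omega
    obtain ⟨z, hz⟩ : ∃ z, ∀ x ∈ C, r ≤ hammingDist x z := by
      by_contra! h
      have hunion : (C.biUnion fun x => {y | hammingDist x y < r}) = univ :=
        eq_univ_of_forall fun z => by
          obtain ⟨x, hx, hxz⟩ := h z
          exact mem_biUnion.2 ⟨x, hx, by simpa using hxz⟩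
      simp [hunion] at hcover
    have hzC : z ∉ C := fun hzC => by simpa using (hz z hzC).trans_lt' hr
    refine ⟨insert z C, by rw [card_insert_of_notMem hzC, hCcard], ?_⟩
    rw [coe_insert]
    refine hC.insert fun x hx _ => ⟨?_, hz x hx⟩
    rw [hammingDist_comm]
    exact hz x hx

lemma exists_pairwise_le_hammingDist {b r N : ℕ} (hr : 0 < r)
    (hN : N * ∑ j ∈ range r, b.choose j ≤ 2 ^ b) :
    ∃ c : Fin N → Fin b → Bool, Pairwise fun s t => r ≤ hammingDist (c s) (c t) := by
  obtain ⟨C, hCcard, hC⟩ := exists_finset_card_eq_pairwise_le_hammingDist hr hN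
  let e := C.equivFinOfCardEq hCcard
  refine ⟨fun s => e.symm s, fun s t hst => hC (e.symm s).2 (e.symm t).2 ?_⟩
  simpa [Subtype.ext_iff] using e.symm.injective.ne hst

lemma sum_range_choose_le_pow {b r : ℕ} (hr : 0 < r) (hrb : r ≤ b) :
    ∑ j ∈ range r, (b.choose j : ℝ) ≤ (exp 1 * b / r) ^ r := by
  set q : ℝ := r / b with hq
  have hb : (0 : ℝ) < b := by exact_mod_cast hr.trans_le hrb
  have hq0 : 0 < q := by positivity
  have hq1 : q ≤ 1 := div_le_one_of_le₀ (by exact_mod_cast hrb) hb.le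
  have key : q ^ r * ∑ j ∈ range r, (b.choose j : ℝ) ≤ exp 1 ^ r :=
    calc q ^ r * ∑ j ∈ range r, (b.choose j : ℝ)
        ≤ ∑ j ∈ range r, q ^ j * 1 ^ (b - j) * b.choose j := by
          rw [mul_sum]
          refine sum_le_sum fun j hj => ?_
          rw [one_pow, mul_one]
          exact mul_le_mul_of_nonneg_right
            (pow_le_pow_of_le_one hq0.le hq1 (mem_range.1 hj).le) (by positivity)
      _ ≤ ∑ j ∈ range (b + 1), q ^ j * 1 ^ (b - j) * b.choose j :=
          sum_le_sum_of_subset_of_nonneg (range_subset_range.2 (by omega))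
            fun _ _ _ => by positivity
      _ = (q + 1) ^ b := (add_pow q 1 b).symm
      _ ≤ exp q ^ b := pow_le_pow_left₀ (by positivity) (add_one_le_exp q) b
      _ = exp 1 ^ r := by rw [← exp_nat_mul, ← exp_nat_mul, hq, mul_div_cancel₀ _ hb.ne', mul_one]
  calc ∑ j ∈ range r, (b.choose j : ℝ) = (q ^ r * ∑ j ∈ range r, (b.choose j : ℝ)) / q ^ r := by
        field_simp
    _ ≤ exp 1 ^ r / q ^ r := by gcongr
    _ = (exp 1 * b / r) ^ r := by rw [hq, ← div_pow]; congr 1; field_simp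

lemma exp_neg_four_le : exp (-4) ≤ 1 / 16 := by
  have h : exp (-1) ^ 4 ≤ (1 / 2) ^ 4 :=
    pow_le_pow_left₀ (exp_pos _).le exp_neg_one_lt_half.le 4
  rw [← exp_nat_mul] at h
  norm_num at h ⊢
  exact h

lemma card_mul_sum_choose_le_two_pow {b N : ℕ} (hb : 17 ≤ b)
    (hN : (N : ℝ) ≤ exp (b / 4300)) :
    N * ∑ j ∈ range (b / 1000 + 1), b.choose j ≤ 2 ^ b := by
  set r := b / 1000 + 1 with hr
  have hbR : (17 : ℝ) ≤ b := by exact_mod_cast hb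
  have hrR : (r : ℝ) ≤ b / 1000 + 1 := by
    rw [hr]; push_cast; linarith [Nat.cast_div_le (m := b) (n := 1000) (α := ℝ)]
  have hbr : (b : ℝ) / r ≤ 1000 := by
    rw [div_le_iff₀ (by positivity)]
    exact_mod_cast (show b ≤ 1000 * r by omega)
  have h1000 : (1000 : ℝ) ≤ exp 7 := by
    have := pow_le_pow_left₀ (by norm_num) exp_one_gt_d9.le 7
    rw [← exp_nat_mul] at this
    norm_num at this ⊢
    linarith
  have hvol : ∑ j ∈ range r, (b.choose j : ℝ) ≤ exp (8 * r) :=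
    calc ∑ j ∈ range r, (b.choose j : ℝ) ≤ (exp 1 * b / r) ^ r :=
          sum_range_choose_le_pow (by omega) (by omega)
      _ ≤ exp 8 ^ r := by
          refine pow_le_pow_left₀ (by positivity) ?_ r
          rw [mul_div_assoc, show (8 : ℝ) = 1 + 7 by norm_num, exp_add]
          gcongr
          linarith
      _ = exp (8 * r) := by rw [← exp_nat_mul, mul_comm]
  have hlog2 : (1 : ℝ) / 2 ≤ log 2 := by linarith [log_two_gt_d9]
  have : (N : ℝ) * ∑ j ∈ range r, (b.choose j : ℝ) ≤ 2 ^ b :=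
    calc (N : ℝ) * ∑ j ∈ range r, (b.choose j : ℝ) ≤ exp (b / 4300) * exp (8 * r) :=
          mul_le_mul hN hvol (by positivity) (by positivity)
      _ ≤ exp (b * log 2) := by rw [← exp_add]; exact exp_le_exp.2 (by nlinarith)
      _ = 2 ^ b := by rw [exp_nat_mul, exp_log two_pos]
  exact_mod_cast this

noncomputable def offDiagBound (β : ℝ) (b r : ℕ) : ℝ :=
  (β + 2) * exp (-β) + exp (2 - (2 * β + 4) * r / b)

lemma natCast_mul_offDiagBound_le {b N : ℕ} {β : ℝ} (hb : 8601 ≤ b) (hβ : (b : ℝ) ≤ 2 * β + 4)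
    (hN : (N : ℝ) ≤ exp (b / 4300)) : N * offDiagBound β b (b / 1000 + 1) ≤ 1 / 8 := by
  have hbR : (8601 : ℝ) ≤ b := by exact_mod_cast hb
  have hbpos : (0 : ℝ) < b := by linarith
  have hβ0 : 0 ≤ β + 2 := by linarith
  have hr : (b : ℝ) / 1000 ≤ ↑(b / 1000 + 1) := by
    push_cast
    have := Nat.lt_div_mul_add (a := b) (b := 1000) (by norm_num)
    rw [div_le_iff₀ (by norm_num)]
    exact_mod_cast this.le.trans_eq (by ring)
  have hfirst : N * ((β + 2) * exp (-β)) ≤ 1 / 16 := by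
    have hβ2 : β + 2 ≤ 2 * exp (β / 2) := by linarith [add_one_le_exp (β / 2)]
    calc N * ((β + 2) * exp (-β)) ≤ exp (b / 4300) * (2 * exp (β / 2) * exp (-β)) := by
          gcongr
      _ = 2 * exp (b / 4300 + β / 2 - β) := by rw [sub_eq_add_neg, exp_add, exp_add]; ring
      _ ≤ 2 * (exp (-4) * exp (-1)) := by
          rw [← exp_add]; gcongr; linarith
      _ ≤ 2 * (1 / 16 * (1 / 2)) := by
          gcongr
          · exact exp_neg_four_le
          · exact exp_neg_one_lt_half.le
      _ = 1 / 16 := by norm_num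
  have hsecond : N * exp (2 - (2 * β + 4) * ↑(b / 1000 + 1) / b) ≤ 1 / 16 := by
    have hexp : (b : ℝ) / 1000 ≤ (2 * β + 4) * ↑(b / 1000 + 1) / b := by
      rw [le_div_iff₀ hbpos]
      nlinarith
    calc N * exp (2 - (2 * β + 4) * ↑(b / 1000 + 1) / b)
        ≤ exp (b / 4300) * exp (2 - b / 1000) := by gcongr
      _ ≤ exp (-4) := by rw [← exp_add]; exact exp_le_exp.2 (by linarith)
      _ ≤ 1 / 16 := exp_neg_four_le
  rw [offDiagBound, mul_add]
  linarith

lemma exp_div_le_four_mul {b : ℕ} (hb1 : 1 ≤ b) (hb : b ≤ 8600) : exp (b / 4300) ≤ 4 * b := by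
  have he : exp 1 < 2.7182818286 := exp_one_lt_d9
  rcases hb1.eq_or_lt with rfl | hb2
  · calc exp ((1 : ℕ) / 4300) ≤ exp 1 := exp_le_exp.2 (by norm_num)
      _ ≤ 4 * (1 : ℕ) := by norm_num; linarith
  · have hb2' : (2 : ℝ) ≤ b := by exact_mod_cast hb2
    have hb' : (b : ℝ) ≤ 8600 := by exact_mod_cast hb
    calc exp (b / 4300) ≤ exp 1 ^ 2 := by rw [← exp_nat_mul]; exact exp_le_exp.2 (by linarith)
      _ ≤ 4 * b := by nlinarith [exp_pos 1]

section Blocks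

variable {m b : ℕ}

def blockCoeff (x : ℝ) (j : Fin m) (u : Fin b → ℝ) : Option (Fin m × Fin b) → ℝ
  | none => x
  | some jp => if jp.1 = j then u jp.2 else 0

lemma sum_blockCoeff_mul (x y : ℝ) (j j' : Fin m) (u w : Fin b → ℝ) :
    ∑ k, blockCoeff x j u k * blockCoeff y j' w k =
      x * y + if j = j' then ∑ p, u p * w p else 0 := by
  rw [Fintype.sum_option, Fintype.sum_prod_type]
  split_ifs with h
  · subst h; simp [blockCoeff, ite_mul, mul_ite]
  · simp [blockCoeff, ite_mul, mul_ite, Ne.symm h]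

def signVec (w : Fin b → Bool) : Fin b → ℝ := fun p => if w p then 1 else -1

lemma sum_signVec_mul (w w' : Fin b → Bool) :
    ∑ p, signVec w p * signVec w' p = b - 2 * hammingDist w w' := by
  have h : ∀ p, signVec w p * signVec w' p = 1 - 2 * if w p ≠ w' p then 1 else 0 := by
    intro p
    unfold signVec
    cases w p <;> cases w' p <;> norm_num
  simp_rw [h]
  rw [sum_sub_distrib, ← mul_sum, sum_boole]
  simp [hammingDist]

lemma signVec_sq (w : Fin b → Bool) (p : Fin b) : signVec w p ^ 2 = 1 := by
  unfold signVec; split_ifs <;> norm_num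

variable {v : Option (Fin m × Fin b) → E}

def blockVec (v : Option (Fin m × Fin b) → E) (x : ℝ) (j : Fin m) (u : Fin b → ℝ) : E :=
  ∑ k, blockCoeff x j u k • v k

lemma inner_blockVec (hv : Orthonormal ℝ v) (x y : ℝ) (j j' : Fin m) (u w : Fin b → ℝ) :
    ⟪blockVec v x j u, blockVec v y j' w⟫ = x * y + if j = j' then ∑ p, u p * w p else 0 := by
  rw [blockVec, blockVec, hv.inner_sum, ← sum_blockCoeff_mul]
  simp

lemma norm_blockVec_sq (hv : Orthonormal ℝ v) (x : ℝ) (j : Fin m) (u : Fin b → ℝ) :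
    ‖blockVec v x j u‖ ^ 2 = x ^ 2 + ∑ p, u p ^ 2 := by
  rw [← real_inner_self_eq_norm_sq, inner_blockVec hv]
  simp [sq]

noncomputable def codeAction (v : Option (Fin m × Fin b) → E) (j : Fin m) (w : Fin b → Bool) : E :=
  blockVec v (√2)⁻¹ j fun p => (√(2 * b))⁻¹ * signVec w p

noncomputable def codeParam (v : Option (Fin m × Fin b) → E) (β : ℝ) (j : Fin m)
    (w : Fin b → Bool) : E :=
  blockVec v (-(β * √2)) j fun p => 2 * (β + 2) / √(2 * b) * signVec w p

lemma norm_codeAction (hv : Orthonormal ℝ v) (hb : 0 < b) (j : Fin m) (w : Fin b → Bool) :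
    ‖codeAction v j w‖ = 1 := by
  rw [← sq_eq_sq₀ (norm_nonneg _) zero_le_one, one_pow, codeAction, norm_blockVec_sq hv]
  simp only [mul_pow, signVec_sq, inv_pow, sq_sqrt (by positivity : (0:ℝ) ≤ 2),
    sq_sqrt (by positivity : (0:ℝ) ≤ 2 * b), mul_one, sum_const, card_univ, Fintype.card_fin,
    nsmul_eq_mul]
  field_simp
  ring

lemma norm_codeParam_le (hv : Orthonormal ℝ v) (hb : 0 < b) {β : ℝ} (hβ : 0 ≤ β) (j : Fin m)
    (w : Fin b → Bool) : ‖codeParam v β j w‖ ≤ 2 * β + 4 := by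
  refine (sq_le_sq₀ (norm_nonneg _) (by positivity)).1 ?_
  rw [codeParam, norm_blockVec_sq hv]
  simp only [mul_pow, div_pow, neg_sq, signVec_sq, sq_sqrt (by positivity : (0:ℝ) ≤ 2),
    sq_sqrt (by positivity : (0:ℝ) ≤ 2 * b), mul_one, sum_const, card_univ, Fintype.card_fin,
    nsmul_eq_mul]
  field_simp
  nlinarith

lemma inner_codeAction_codeParam (hv : Orthonormal ℝ v) (hb : 0 < b) (β : ℝ) (j j' : Fin m)
    (w w' : Fin b → Bool) :
    ⟪codeAction v j w, codeParam v β j' w'⟫ =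
      -β + if j = j' then (β + 2) * (b - 2 * hammingDist w w') / b else 0 := by
  have hs : √(2 * b) ^ 2 = 2 * b := sq_sqrt (by positivity)
  rw [codeAction, codeParam, inner_blockVec hv]
  congr 1
  · field_simp
  · congr 1
    calc ∑ p, (√(2 * b))⁻¹ * signVec w p * (2 * (β + 2) / √(2 * b) * signVec w' p)
        = (β + 2) / b * ∑ p, signVec w p * signVec w' p := by
          rw [mul_sum]
          refine sum_congr rfl fun p _ => ?_
          field_simp
          rw [hs]
      _ = _ := by rw [sum_signVec_mul]; ring

lemma inner_codeAction_blockVec_zero (hv : Orthonormal ℝ v) (β : ℝ) (j j' : Fin m)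
    (w : Fin b → Bool) : ⟪codeAction v j w, blockVec v (-(β * √2)) j' 0⟫ = -β := by
  rw [codeAction, inner_blockVec hv]
  field_simp
  simp

lemma klSigmoid_le_offDiagBound {β : ℝ} (hβ : 0 ≤ β) (hb : 0 < b) {r D : ℕ} (hrD : r ≤ D)
    (hDb : D ≤ b) : klSigmoid (-β) (-β + (β + 2) * (b - 2 * D) / b) ≤ offDiagBound β b r := by
  have hb' : (0 : ℝ) < b := by exact_mod_cast hb
  have hDb' : (D : ℝ) ≤ b := by exact_mod_cast hDb
  have hy : -β + (β + 2) * (b - 2 * D) / b = 2 - (2 * β + 4) * D / b := by field_simp; ring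
  refine (klSigmoid_le (Δ := β + 2) ?_ (by linarith)).trans ?_
  · have : (2 * β + 4) * D / b ≤ 2 * β + 4 := by rw [div_le_iff₀ hb']; nlinarith
    rw [hy]
    linarith
  · rw [hy, mul_comm, offDiagBound]
    gcongr

lemma sum_ite_fst_finProdFinEquiv_symm {N : ℕ} (j : Fin m) (B : ℝ) :
    ∑ i : Fin (m * N), (if (finProdFinEquiv.symm i).1 = j then B else 0) = N * B := by
  rw [← finProdFinEquiv.sum_comp, Fintype.sum_prod_type]
  simp

theorem exists_isLogisticEluderSeq_of_code [NeZero m] (hv : Orthonormal ℝ v) (hb : 0 < b)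
    {N r : ℕ} {c : Fin N → Fin b → Bool} (hc : Pairwise fun s t => r ≤ hammingDist (c s) (c t))
    {β S : ℝ} (hβ : 4 ≤ β) (hβS : 2 * β + 4 ≤ S)
    (hN : N * offDiagBound β b r ≤ 1 / 8) :
    ∃ (θstar : E) (a θ : Fin (m * N) → E), IsLogisticEluderSeq S θstar a θ := by
  set B := offDiagBound β b r
  have hB : 0 ≤ B := add_nonneg (mul_nonneg (by linarith) (exp_pos _).le) (exp_pos _).le
  let J : Fin (m * N) → Fin m := fun t => (finProdFinEquiv.symm t).1
  let R : Fin (m * N) → Fin N := fun t => (finProdFinEquiv.symm t).2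
  have hinner (i t : Fin (m * N)) :=
    inner_codeAction_codeParam hv hb β (J i) (J t) (c (R i)) (c (R t))
  have hstar (i : Fin (m * N)) := inner_codeAction_blockVec_zero hv β (J i) 0 (c (R i))
  refine ⟨blockVec v (-(β * √2)) 0 0, fun t => codeAction v (J t) (c (R t)),
    fun t => codeParam v β (J t) (c (R t)), ?_, fun t => (norm_codeAction hv hb _ _).le,
    fun t => (norm_codeParam_le hv hb (by linarith) _ _).trans hβS, fun t => ⟨?_, ?_⟩⟩
  · have := norm_blockVec_sq hv (-(β * √2)) (0 : Fin m) 0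
    refine (sq_le_sq₀ (norm_nonneg _) (by linarith)).1 ?_
    rw [this]
    simp only [Pi.zero_apply, ne_eq, OfNat.ofNat_ne_zero, not_false_eq_true, zero_pow,
      sum_const_zero, add_zero, neg_sq, mul_pow, sq_sqrt zero_le_two]
    nlinarith
  · have hterm : ∀ i < t, klSigmoid ⟪codeAction v (J i) (c (R i)), blockVec v (-(β * √2)) 0 0⟫
        ⟪codeAction v (J i) (c (R i)), codeParam v β (J t) (c (R t))⟫ ≤
          if J i = J t then B else 0 := by
      intro i hit
      rw [hstar, hinner]
      split_ifs with hJ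
      · have hR : R i ≠ R t := fun hR => hit.ne (finProdFinEquiv.symm.injective (Prod.ext hJ hR))
        exact klSigmoid_le_offDiagBound (by linarith) hb (hc hR)
          ((hammingDist_le_card_fintype).trans_eq (Fintype.card_fin b))
      · rw [add_zero, klSigmoid_self]
    calc _ ≤ ∑ i ∈ univ.filter (fun i => i < t), (if J i = J t then B else 0) :=
          sum_le_sum fun i hi => hterm i (mem_filter.1 hi).2
      _ ≤ ∑ i, (if J i = J t then B else 0) :=
          sum_le_sum_of_subset_of_nonneg (filter_subset _ _) fun _ _ _ => by
            split_ifs <;> simp [hB]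
      _ = N * B := sum_ite_fst_finProdFinEquiv_symm _ _
      _ ≤ 1 / 8 := hN
  · rw [hstar, hinner, hammingDist_self]
    have hdiag : -β + (β + 2) * (b - 2 * ((0 : ℕ) : ℝ)) / b = 2 := by field_simp; ring
    rw [if_pos rfl, hdiag]
    exact one_eighth_le_klSigmoid_two (by linarith)

end Blocks

lemma hasLogisticEluderSeq_of_le {d b : ℕ} {S : ℝ} (hd : 1 ≤ d) (hS : 4 ≤ S) (hb1 : 1 ≤ b)
    (hb : b ≤ 8600) :
    HasLogisticEluderSeq (EuclideanSpace ℝ (Fin d)) S ((d - 1) / (4 * b) * exp (b / 4300)) := by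
  have hb' : (0 : ℝ) < 4 * b := by positivity
  have hd' : (0 : ℝ) ≤ d - 1 := by rw [sub_nonneg]; exact_mod_cast hd
  refine ⟨d, ?_, _, _, _,
    isLogisticEluderSeq_orthonormal (EuclideanSpace.basisFun (Fin d) ℝ).orthonormal hS⟩
  calc ((d : ℝ) - 1) / (4 * b) * exp (b / 4300) ≤ ((d : ℝ) - 1) / (4 * b) * (4 * b) := by
        gcongr
        exact exp_div_le_four_mul hb1 hb
    _ ≤ d := by rw [div_mul_cancel₀ _ hb'.ne']; linarith

lemma div_two_mul_le_natCast_div {a b : ℕ} (hb : 0 < b) (hba : b ≤ a) :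
    (a : ℝ) / (2 * b) ≤ (a / b : ℕ) := by
  have h1 : (a : ℝ) < (a / b : ℕ) * b + b := by exact_mod_cast Nat.lt_div_mul_add hb
  have h2 : (1 : ℝ) ≤ (a / b : ℕ) := by exact_mod_cast Nat.div_pos hba hb
  rw [div_le_iff₀ (by positivity)]
  nlinarith

lemma hasLogisticEluderSeq_of_large {d b : ℕ} {S : ℝ} (hb : 8601 ≤ b) (hbS : (b : ℝ) ≤ S)
    (hbd : b ≤ d - 1) :
    HasLogisticEluderSeq (EuclideanSpace ℝ (Fin d)) S ((d - 1) / (4 * b) * exp (b / 4300)) := by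
  set N := ⌈exp (b / 4300) / 2⌉₊
  set m := (d - 1) / b
  have hbR : (8601 : ℝ) ≤ b := by exact_mod_cast hb
  have hm : 0 < m := Nat.div_pos hbd (by omega)
  have : NeZero m := ⟨hm.ne'⟩
  have hexp : 2 ≤ exp (b / 4300) := by linarith [add_one_le_exp ((b : ℝ) / 4300)]
  have hN : (N : ℝ) ≤ exp (b / 4300) := by linarith [Nat.ceil_lt_add_one (by positivity :
    0 ≤ exp (b / 4300) / 2)]
  obtain ⟨c, hc⟩ := exists_pairwise_le_hammingDist (Nat.succ_pos (b / 1000))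
    (card_mul_sum_choose_le_two_pow (by omega) hN)
  obtain ⟨v, hv⟩ : ∃ v : Option (Fin m × Fin b) → EuclideanSpace ℝ (Fin d), Orthonormal ℝ v := by
    obtain ⟨e⟩ := Function.Embedding.nonempty_of_card_le (α := Option (Fin m × Fin b))
      (β := Fin d) (by simp; have : m * b ≤ d - 1 := Nat.div_mul_le_self _ _; omega)
    exact ⟨_, (EuclideanSpace.basisFun (Fin d) ℝ).orthonormal.comp e e.injective⟩
  refine ⟨m * N, ?_, exists_isLogisticEluderSeq_of_code hv (by omega) hc (β := S / 2 - 2)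
    (by linarith) (by linarith) (natCast_mul_offDiagBound_le hb (by linarith) hN)⟩
  have hm' : ((d : ℝ) - 1) / (2 * b) ≤ m := by
    simpa [Nat.cast_sub (show 1 ≤ d by omega)] using div_two_mul_le_natCast_div (by omega) hbd
  calc ((d : ℝ) - 1) / (4 * b) * exp (b / 4300)
        = ((d : ℝ) - 1) / (2 * b) * (exp (b / 4300) / 2) := by ring
    _ ≤ m * N := mul_le_mul hm' (Nat.le_ceil _) (by positivity) (by positivity)
    _ = ↑(m * N) := by push_cast; ring

/-- Eluder dimension lower bound for logistic generalised linear models: there is a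
`(1/8)`-eluder sequence for the expected excess log-loss class of length at least
`((d−1)/(4b))·exp(b/4300)`, where `b = min(⌊S⌋, d−1)`. -/
theorem stmt19 (d : ℕ) (hd : 2 ≤ d) (S : ℝ) (hS : 4 ≤ S)
    (b : ℕ) (hb : b = min (Nat.floor S) (d - 1))
    (μ : ℝ → ℝ) (hμ : ∀ u, μ u = 1 / (1 + Real.exp (-u))) :
    ∃ θstar : EuclideanSpace ℝ (Fin d), ‖θstar‖ ≤ S ∧
      ∃ n : ℕ, ((d : ℝ) - 1) / (4 * b) * Real.exp (b / 4300) ≤ n ∧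
        ∃ a θ : Fin n → EuclideanSpace ℝ (Fin d),
          (∀ t, ‖a t‖ ≤ 1) ∧ (∀ t, ‖θ t‖ ≤ S) ∧
          ∀ t : Fin n,
            (∑ i ∈ Finset.univ.filter (fun i => i < t),
                logisticExcess μ θstar (θ t) (a i)) ≤ 1 / 8 ∧
              1 / 8 ≤ logisticExcess μ θstar (θ t) (a t) := by
  obtain rfl : μ = sigmoid := funext fun u => by rw [hμ, sigmoid_def, one_div]
  have hfloor : 4 ≤ ⌊S⌋₊ := Nat.le_floor (by exact_mod_cast hS)
  have hbS : (b : ℝ) ≤ S :=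
    (Nat.cast_le.2 (hb ▸ min_le_left _ _)).trans (Nat.floor_le (by linarith))
  obtain ⟨n, hn, θstar, a, θ, hθstar, ha, hθ, hseq⟩ :
      HasLogisticEluderSeq (EuclideanSpace ℝ (Fin d)) S ((d - 1) / (4 * b) * exp (b / 4300)) := by
    rcases le_or_gt b 8600 with hsmall | hlarge
    · exact hasLogisticEluderSeq_of_le (by omega) hS (by omega) hsmall
    · exact hasLogisticEluderSeq_of_large hlarge hbS (by omega)
  exact ⟨θstar, hθstar, n, hn, a, θ, ha, hθ, hseq⟩
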